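/- Let G be a graph with a minimum twin cover T, and let S̃ be a determining set for the quotient graph G̃ containing T̃ = {[x] : x ∈ T}. Let R = {x ∈ V(G) : [x] ∈ S̃ \ T̃}. Then S = T ∪ R is a determining set for G; moreover, if S̃ has minimum size among determining sets for G̃ containing T̃, then S is a minimum-size determining set for G. -/

import Mathlib

open SimpleGraph

/-- The generalized Mycielskian `μ_t(G)`: vertices are `some (s, i)` for levels
`0 ≤ s ≤ t` (level `0` being the original vertices) plus a root `none`. -/
def Mycielskian {V : Type*} (G : SimpleGraph V) (t : ℕ) :
    SimpleGraph (Option (Fin (t + 1) × V)) where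
  Adj x y :=
    match x, y with
    | none, none => False
    | none, some (s, _) => s.val = t
    | some (s, _), none => s.val = t
    | some (s, i), some (r, j) =>
        G.Adj i j ∧ ((s.val = 0 ∧ r.val = 0) ∨ s.val + 1 = r.val ∨ r.val + 1 = s.val)
  symm := by
    constructor
    rintro (_ | ⟨s, i⟩) (_ | ⟨r, j⟩) h
    · exact h
    · exact h
    · exact h
    · exact ⟨h.1.symm, by tauto⟩
  loopless := by
    constructor
    rintro (_ | ⟨s, i⟩) h
    · exact h
    · exact G.loopless.irrefl i h.1

/-- `S` is a determining set for `G`: the only automorphism fixing `S` pointwise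
is the identity. -/
def IsDetermining {V : Type*} (G : SimpleGraph V) (S : Set V) : Prop :=
  ∀ φ : G ≃g G, (∀ v ∈ S, φ v = v) → ∀ v, φ v = v

/-- The determining number of `G`. -/
noncomputable def detNum {V : Type*} (G : SimpleGraph V) : ℕ :=
  sInf {n | ∃ S : Finset V, S.card = n ∧ IsDetermining G ↑S}

/-- A coloring is distinguishing if no nontrivial automorphism preserves all
color classes. -/
def IsDistinguishing {V : Type*} (G : SimpleGraph V) {C : Type*} (c : V → C) : Prop :=
  ∀ φ : G ≃g G, (∀ v, c (φ v) = c v) → ∀ v, φ v = v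

/-- The distinguishing number of `G`. -/
noncomputable def distNum {V : Type*} (G : SimpleGraph V) : ℕ :=
  sInf {d | ∃ c : V → Fin d, IsDistinguishing G c}

/-- The cost of 2-distinguishing: the minimum size of a color class over all
2-distinguishing colorings. -/
noncomputable def cost2 {V : Type*} (G : SimpleGraph V) [Fintype V] : ℕ :=
  sInf {n | ∃ c : V → Bool, IsDistinguishing G c ∧
    n = (Finset.univ.filter fun v => c v = true).card}

/-- The twin equivalence relation: equal open neighborhoods. -/
def twinSetoid {V : Type*} (G : SimpleGraph V) : Setoid V where
  r x y := G.neighborSet x = G.neighborSet y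
  iseqv := ⟨fun _ => rfl, Eq.symm, Eq.trans⟩

/-- The twin quotient graph `G̃`. -/
def twinQuotient {V : Type*} (G : SimpleGraph V) :
    SimpleGraph (Quotient (twinSetoid G)) where
  Adj a b := ∃ p q : V, Quotient.mk (twinSetoid G) p = a ∧
    Quotient.mk (twinSetoid G) q = b ∧ G.Adj p q
  symm := by constructor; rintro a b ⟨p, q, hp, hq, h⟩; exact ⟨q, p, hq, hp, h.symm⟩
  loopless := by
    constructor
    rintro a ⟨p, q, rfl, hq, h⟩
    have htw : G.neighborSet q = G.neighborSet p := Quotient.exact hq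
    have hmem : q ∈ G.neighborSet p := h
    rw [← htw] at hmem
    exact G.loopless.irrefl q hmem

/-- A twin cover: contains at least one of every pair of distinct twins. -/
def IsTwinCover {V : Type*} (G : SimpleGraph V) (T : Set V) : Prop :=
  ∀ x y : V, x ≠ y → G.neighborSet x = G.neighborSet y → x ∈ T ∨ y ∈ T

/-- A minimum twin cover. -/
def IsMinTwinCover {V : Type*} (G : SimpleGraph V) (T : Set V) : Prop :=
  IsTwinCover G T ∧ ∀ T' : Set V, IsTwinCover G T' → T.ncard ≤ T'.ncard

/-- Attach `ℓ` pendant vertices to the vertex `w` of `G`. -/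
def attachPendants {V : Type*} (G : SimpleGraph V) (w : V) (ℓ : ℕ) :
    SimpleGraph (V ⊕ Fin ℓ) where
  Adj x y :=
    match x, y with
    | Sum.inl a, Sum.inl b => G.Adj a b
    | Sum.inl a, Sum.inr _ => a = w
    | Sum.inr _, Sum.inl b => b = w
    | Sum.inr _, Sum.inr _ => False
  symm := by constructor; rintro (a | a) (b | b) h <;> simp_all <;> exact h.symm
  loopless := by constructor; rintro (a | a) h <;> simp_all

/-!
Write `π = twinClass G`. An automorphism of `G` preserves the twin relation and so descends to
`G̃`; if it fixes `T ∪ R` pointwise, its image fixes `S̃` and is trivial, so it moves each vertex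
only within its twin class, which the twin cover `T ⊆ T ∪ R` forbids. Conversely, as `T` is a
twin cover, every class outside `T̃` is a single vertex, so an automorphism `ψ` of `G̃` fixing `T̃`
pointwise lifts to `G`: fix each vertex whose class lies in `T̃` and send any other `v` to the
unique vertex of `ψ (π v)`. For minimality, a determining set `B` of `G` is a twin cover
(swapping two twins outside `B` is an automorphism fixing `B`), so `|B ∩ π⁻¹ T̃| ≥ |T|`; by the
lifting, `π B ∪ T̃` is determining for `G̃`, so `|S̃ \ T̃| ≤ |π B \ T̃| = |B \ π⁻¹ T̃|`.
-/

section TwinQuotient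

variable {V : Type*} {G : SimpleGraph V}

abbrev twinClass (G : SimpleGraph V) : V → Quotient (twinSetoid G) :=
  Quotient.mk (twinSetoid G)

lemma adj_iff_of_neighborSet_eq {x y : V} (h : G.neighborSet x = G.neighborSet y) (z : V) :
    G.Adj x z ↔ G.Adj y z :=
  Set.ext_iff.mp h z

lemma twinQuotient_adj_twinClass {x y : V} :
    (twinQuotient G).Adj (twinClass G x) (twinClass G y) ↔ G.Adj x y := by
  refine ⟨fun ⟨p, q, hp, hq, hpq⟩ => ?_, fun h => ⟨x, y, rfl, rfl, h⟩⟩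
  have hxq : G.Adj x q := (adj_iff_of_neighborSet_eq (Quotient.exact hp) q).mp hpq
  exact ((adj_iff_of_neighborSet_eq (Quotient.exact hq) x).mp hxq.symm).symm

lemma IsDetermining.mono {S S' : Set V} (hS : IsDetermining G S) (hSS' : S ⊆ S') :
    IsDetermining G S' :=
  fun φ hφ => hS φ fun v hv => hφ v (hSS' hv)

namespace SimpleGraph.Iso

variable {W : Type*} {G' : SimpleGraph W}

lemma neighborSet_apply_eq_iff (φ : G ≃g G') {a b : V} :
    G'.neighborSet (φ a) = G'.neighborSet (φ b) ↔ G.neighborSet a = G.neighborSet b := by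
  rw [← φ.image_neighborSet, ← φ.image_neighborSet]
  exact (Set.image_injective.mpr φ.injective).eq_iff

def twinQuotientMap (φ : G ≃g G') : twinQuotient G ≃g twinQuotient G' where
  toEquiv := Quotient.congr φ.toEquiv fun _ _ => φ.neighborSet_apply_eq_iff.symm
  map_rel_iff' {a b} := by
    induction a using Quotient.inductionOn
    induction b using Quotient.inductionOn
    exact twinQuotient_adj_twinClass.trans
      (φ.map_adj_iff.trans twinQuotient_adj_twinClass.symm)

@[simp]
lemma twinQuotientMap_twinClass (φ : G ≃g G') (v : V) :
    φ.twinQuotientMap (twinClass G v) = twinClass G' (φ v) :=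
  rfl

end SimpleGraph.Iso

open Classical in
noncomputable def twinSwap {x y : V} (h : G.neighborSet x = G.neighborSet y) : G ≃g G where
  toEquiv := Equiv.swap x y
  map_rel_iff' {a b} := by
    have hN : ∀ v, G.neighborSet (Equiv.swap x y v) = G.neighborSet v := by
      intro v
      rcases eq_or_ne v x with rfl | hvx
      · rw [Equiv.swap_apply_left, h]
      rcases eq_or_ne v y with rfl | hvy
      · rw [Equiv.swap_apply_right, h]
      · rw [Equiv.swap_apply_of_ne_of_ne hvx hvy]
    calc G.Adj (Equiv.swap x y a) (Equiv.swap x y b)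
        ↔ G.Adj a (Equiv.swap x y b) := adj_iff_of_neighborSet_eq (hN a) _
      _ ↔ G.Adj b a := by rw [G.adj_comm]; exact adj_iff_of_neighborSet_eq (hN b) a
      _ ↔ G.Adj a b := G.adj_comm b a

lemma IsDetermining.isTwinCover {B : Set V} (hB : IsDetermining G B) : IsTwinCover G B := by
  classical
  intro x y hxy h
  by_contra! hxyB
  have hfix : ∀ v ∈ B, twinSwap h v = v := fun v hv =>
    Equiv.swap_apply_of_ne_of_ne (ne_of_mem_of_not_mem hv hxyB.1) (ne_of_mem_of_not_mem hv hxyB.2)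
  exact hxy ((hB _ hfix x).symm.trans (Equiv.swap_apply_left x y))

namespace IsTwinCover

variable {T : Set V}

lemma eq_of_twinClass_eq (hT : IsTwinCover G T) {v w : V}
    (hv : twinClass G v ∉ twinClass G '' T) (h : twinClass G w = twinClass G v) : w = v := by
  by_contra hwv
  rcases hT w v hwv (Quotient.exact h) with hw | hv'
  · exact hv ⟨w, hw, h⟩
  · exact hv ⟨v, hv', rfl⟩

lemma ncard_preimage_twinClass (hT : IsTwinCover G T) {A : Set (Quotient (twinSetoid G))}
    (hA : Disjoint A (twinClass G '' T)) : (twinClass G ⁻¹' A).ncard = A.ncard := by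
  have hinj : Set.InjOn (twinClass G) (twinClass G ⁻¹' A) := fun _ _ w hw h =>
    hT.eq_of_twinClass_eq (Set.disjoint_left.mp hA hw) h
  rw [← hinj.ncard_image, Set.image_preimage_eq A Quotient.mk_surjective]

lemma inter_preimage_image_twinClass {B : Set V} (hT : IsTwinCover G T) (hB : IsTwinCover G B) :
    IsTwinCover G (B ∩ twinClass G ⁻¹' (twinClass G '' T)) := by
  intro x y hxy h
  have hxy' : twinClass G x = twinClass G y := Quotient.sound h
  have hx : twinClass G x ∈ twinClass G '' T := by
    rcases hT x y hxy h with hxT | hyT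
    · exact ⟨x, hxT, rfl⟩
    · exact ⟨y, hyT, hxy'.symm⟩
  rcases hB x y hxy h with hxB | hyB
  · exact Or.inl ⟨hxB, hx⟩
  · exact Or.inr ⟨hyB, show twinClass G y ∈ _ from hxy' ▸ hx⟩

lemma isDetermining_of_twinQuotient {S : Set V} (hT : IsTwinCover G T) (hTS : T ⊆ S)
    (hS : IsDetermining (twinQuotient G) (twinClass G '' S)) : IsDetermining G S := by
  intro φ hφ v
  have htwin : twinClass G (φ v) = twinClass G v :=
    hS φ.twinQuotientMap (by rintro _ ⟨w, hw, rfl⟩; simp [hφ w hw]) (twinClass G v)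
  by_contra hne
  rcases hT (φ v) v hne (Quotient.exact htwin) with h | h
  · exact hne (φ.injective (hφ _ (hTS h)))
  · exact hne (hφ v (hTS h))

end IsTwinCover

section Lift

variable {T : Set V}

open Classical in
noncomputable def twinLift (T : Set V) (ψ : Quotient (twinSetoid G) ≃ Quotient (twinSetoid G))
    (v : V) : V :=
  if twinClass G v ∈ twinClass G '' T then v else (ψ (twinClass G v)).out

lemma twinClass_twinLift {ψ : Quotient (twinSetoid G) ≃ Quotient (twinSetoid G)}
    (hψ : ∀ a ∈ twinClass G '' T, ψ a = a) (v : V) :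
    twinClass G (twinLift T ψ v) = ψ (twinClass G v) := by
  unfold twinLift
  split_ifs with h
  · exact (hψ _ h).symm
  · exact Quotient.out_eq _

lemma twinLift_of_apply_eq (hT : IsTwinCover G T)
    {ψ : Quotient (twinSetoid G) ≃ Quotient (twinSetoid G)} {v : V}
    (hv : ψ (twinClass G v) = twinClass G v) : twinLift T ψ v = v := by
  unfold twinLift
  split_ifs with h
  · rfl
  · rw [hv]
    exact hT.eq_of_twinClass_eq h (Quotient.out_eq _)

lemma twinLift_symm_twinLift (hT : IsTwinCover G T)
    {ψ : Quotient (twinSetoid G) ≃ Quotient (twinSetoid G)}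
    (hψ : ∀ a ∈ twinClass G '' T, ψ a = a) (v : V) :
    twinLift T ψ.symm (twinLift T ψ v) = v := by
  have hψsymm : ∀ a ∈ twinClass G '' T, ψ.symm a = a := fun a ha =>
    ψ.symm_apply_eq.mpr (hψ a ha).symm
  by_cases h : twinClass G v ∈ twinClass G '' T
  · simp [twinLift, h]
  · refine hT.eq_of_twinClass_eq h ?_
    rw [twinClass_twinLift hψsymm, twinClass_twinLift hψ, ψ.symm_apply_apply]

noncomputable def IsTwinCover.liftIso (hT : IsTwinCover G T) (ψ : twinQuotient G ≃g twinQuotient G)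
    (hψ : ∀ a ∈ twinClass G '' T, ψ a = a) : G ≃g G where
  toFun := twinLift T ψ.toEquiv
  invFun := twinLift T ψ.toEquiv.symm
  left_inv := twinLift_symm_twinLift hT hψ
  right_inv := twinLift_symm_twinLift (ψ := ψ.toEquiv.symm) hT fun a ha =>
    ψ.toEquiv.symm_apply_eq.mpr (hψ a ha).symm
  map_rel_iff' {a b} := by
    simp only [Equiv.coe_fn_mk]
    rw [← twinQuotient_adj_twinClass, ← twinQuotient_adj_twinClass (x := a),
      twinClass_twinLift hψ, twinClass_twinLift hψ]
    exact ψ.map_rel_iff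

lemma IsTwinCover.twinClass_liftIso (hT : IsTwinCover G T) (ψ : twinQuotient G ≃g twinQuotient G)
    (hψ : ∀ a ∈ twinClass G '' T, ψ a = a) (v : V) :
    twinClass G (hT.liftIso ψ hψ v) = ψ (twinClass G v) :=
  twinClass_twinLift hψ v

lemma IsTwinCover.liftIso_of_apply_eq (hT : IsTwinCover G T)
    (ψ : twinQuotient G ≃g twinQuotient G) (hψ : ∀ a ∈ twinClass G '' T, ψ a = a) {v : V}
    (hv : ψ (twinClass G v) = twinClass G v) : hT.liftIso ψ hψ v = v :=
  twinLift_of_apply_eq hT hv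

end Lift

lemma IsDetermining.twinQuotient_image_union {T B : Set V} (hT : IsTwinCover G T)
    (hB : IsDetermining G B) :
    IsDetermining (twinQuotient G) (twinClass G '' B ∪ twinClass G '' T) := by
  intro ψ hψ a
  have hψT : ∀ a ∈ twinClass G '' T, ψ a = a := fun a ha => hψ a (Or.inr ha)
  have hlift : ∀ v, hT.liftIso ψ hψT v = v := hB _ fun b hb =>
    hT.liftIso_of_apply_eq ψ hψT (hψ _ (Or.inl ⟨b, hb, rfl⟩))
  obtain ⟨v, rfl⟩ := Quotient.mk_surjective a
  rw [← hT.twinClass_liftIso ψ hψT, hlift]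

lemma IsMinTwinCover.ncard_add_ncard_image_sdiff_le [Finite V] {T B : Set V}
    (hT : IsMinTwinCover G T) (hB : IsTwinCover G B) :
    T.ncard + (twinClass G '' B \ twinClass G '' T).ncard ≤ B.ncard := by
  set Tt := twinClass G '' T
  have himage : twinClass G '' B \ Tt = twinClass G '' (B \ twinClass G ⁻¹' Tt) := by
    ext a
    constructor
    · rintro ⟨⟨b, hb, rfl⟩, ha⟩
      exact ⟨b, ⟨hb, ha⟩, rfl⟩
    · rintro ⟨b, ⟨hb, hbT⟩, rfl⟩
      exact ⟨⟨b, hb, rfl⟩, hbT⟩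
  have hinj : Set.InjOn (twinClass G) (B \ twinClass G ⁻¹' Tt) := fun _ _ _ hw h =>
    hT.1.eq_of_twinClass_eq hw.2 h
  calc T.ncard + (twinClass G '' B \ Tt).ncard
      ≤ (B ∩ twinClass G ⁻¹' Tt).ncard + (B \ twinClass G ⁻¹' Tt).ncard := by
        rw [himage, hinj.ncard_image]
        exact Nat.add_le_add_right (hT.2 _ (hT.1.inter_preimage_image_twinClass hB)) _
    _ = B.ncard := Set.ncard_inter_add_ncard_sdiff_eq_ncard B _

end TwinQuotient

/-- for a minimum twin cover `T` and a determining set `S̃` for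
`G̃` containing `T̃`, the set `S = T ∪ R` is determining for `G`, and is of
minimum size whenever `S̃` is of minimum size among determining sets for `G̃`
containing `T̃`. -/
theorem det_from_quotient {V : Type*} [Fintype V] (G : SimpleGraph V)
    (T : Set V) (hT : IsMinTwinCover G T)
    (St : Set (Quotient (twinSetoid G)))
    (hTSt : Quotient.mk (twinSetoid G) '' T ⊆ St)
    (hSt : IsDetermining (twinQuotient G) St) :
    IsDetermining G (T ∪ {x : V | Quotient.mk (twinSetoid G) x ∈
      St \ (Quotient.mk (twinSetoid G) '' T)}) ∧
    ((∀ A : Set (Quotient (twinSetoid G)), IsDetermining (twinQuotient G) A →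
        Quotient.mk (twinSetoid G) '' T ⊆ A → St.ncard ≤ A.ncard) →
      ∀ B : Set V, IsDetermining G B →
        (T ∪ {x : V | Quotient.mk (twinSetoid G) x ∈
          St \ (Quotient.mk (twinSetoid G) '' T)}).ncard ≤ B.ncard) := by
  set Tt := twinClass G '' T
  set R := twinClass G ⁻¹' (St \ Tt)
  have hRcard : R.ncard = (St \ Tt).ncard :=
    hT.1.ncard_preimage_twinClass Set.disjoint_sdiff_left
  refine ⟨hT.1.isDetermining_of_twinQuotient Set.subset_union_left (hSt.mono ?_), ?_⟩
  · intro a ha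
    obtain ⟨v, rfl⟩ := Quotient.mk_surjective a
    by_cases hv : twinClass G v ∈ Tt
    · obtain ⟨t, ht, htv⟩ := hv
      exact ⟨t, Or.inl ht, htv⟩
    · exact ⟨v, Or.inr ⟨ha, hv⟩, rfl⟩
  intro hmin B hB
  have hStB := hmin _ (hB.twinQuotient_image_union hT.1) Set.subset_union_right
  calc (T ∪ R).ncard = T.ncard + (St \ Tt).ncard := by
        rw [Set.ncard_union_eq (Set.disjoint_left.mpr fun x hx hxR => hxR.2 ⟨x, hx, rfl⟩), hRcard]
    _ = T.ncard + (St.ncard - Tt.ncard) := by rw [Set.ncard_sdiff hTSt]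
    _ ≤ T.ncard + ((twinClass G '' B ∪ Tt).ncard - Tt.ncard) := by gcongr
    _ = T.ncard + (twinClass G '' B \ Tt).ncard := by
        rw [← Set.ncard_sdiff Set.subset_union_right, Set.union_sdiff_right]
    _ ≤ B.ncard := hT.ncard_add_ncard_image_sdiff_le hB.isTwinCover
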